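/- Let μ^k, ν^k, μ, ν be probability measures on ℝ with finite first moments such that W₁(μ^k, μ) → 0 and W₁(ν^k, ν) → 0. Let μ^k ∨_cd ν^k denote the measure whose put function is P_{μ^k} ∨ P_{ν^k} (pointwise maximum). Then W₁(μ^k ∨_cd ν^k, μ ∨_cd ν) → 0. -/

import Mathlib

/-!
Since `t ↦ (x - t)⁺` is 1-Lipschitz, `|P_α x - P_β x| ≤ W1 α β`, and together with
`|max a b - max c d| ≤ max |a - c| |b - d|` this makes `P_{σ_k} → P_σ` uniformly. Uniform
convergence of put functions in turn forces `W1`-convergence. The quantile coupling gives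
`W1 α β ≤ ∫ |F_α - F_β|`. Outside `[-A, A]` this integral is bounded by `P(-A)` and by the call
function `C(A) = ∫ (t - A)⁺`, and both converge along with `P` (for `C` through `P - C = x - mean`).
On `[-A, A]`, the slopes of the convex function `P` give `h F(x) ≤ P(x + h) - P(x) ≤ h F(x + h)`,
so `|F_α - F_β|(x) ≤ F_β(x + h) - F_β(x - h) + 2δ/h` when `|P_α - P_β| ≤ δ`; integrating, the
middle part is at most `2h + 4Aδ/h`.
-/

open MeasureTheory ProbabilityTheory Filter

noncomputable section

/-- The set of couplings of two measures on `ℝ`. -/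
def Couplings (μ ν : Measure ℝ) : Set (Measure (ℝ × ℝ)) :=
  {π | π.map Prod.fst = μ ∧ π.map Prod.snd = ν}

/-- Wasserstein-1 distance, defined via couplings. -/
def W1 (μ ν : Measure ℝ) : ℝ :=
  sInf ((fun π : Measure (ℝ × ℝ) => ∫ p, |p.1 - p.2| ∂π) '' Couplings μ ν)

/-- The put function `P_η(x) = ∫ (x - t)⁺ η(dt)`. -/
def put (η : Measure ℝ) (x : ℝ) : ℝ := ∫ t, max (x - t) 0 ∂η

open Set Topology

theorem LipschitzWith.integrable_comp {γ E F : Type*} [MeasurableSpace γ] {μ : Measure γ}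
    [IsFiniteMeasure μ] [NormedAddCommGroup E] [NormedAddCommGroup F] {K : NNReal} {f : E → F}
    (hf : LipschitzWith K f) {φ : γ → E} (hφ : Integrable φ μ) :
    Integrable (fun x => f (φ x)) μ := by
  refine ((integrable_const ‖f 0‖).add (hφ.norm.const_mul K)).mono'
    (hf.continuous.comp_aestronglyMeasurable hφ.1) (ae_of_all _ fun x => ?_)
  have := hf.norm_sub_le (φ x) 0
  rw [sub_zero] at this
  simp only [Pi.add_apply]
  linarith [norm_le_insert' (f (φ x)) (f 0)]

theorem W1_nonneg (μ ν : Measure ℝ) : 0 ≤ W1 μ ν :=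
  Real.sInf_nonneg <| by
    rintro _ ⟨π, -, rfl⟩
    exact integral_nonneg fun p => abs_nonneg _

theorem W1_le_integral {μ ν : Measure ℝ} {π : Measure (ℝ × ℝ)} (hπ : π ∈ Couplings μ ν) :
    W1 μ ν ≤ ∫ p, |p.1 - p.2| ∂π :=
  csInf_le ⟨0, by rintro _ ⟨π', -, rfl⟩; exact integral_nonneg fun p => abs_nonneg _⟩
    ⟨π, hπ, rfl⟩

theorem prod_mem_couplings (μ ν : Measure ℝ) [IsProbabilityMeasure μ] [IsProbabilityMeasure ν] :
    μ.prod ν ∈ Couplings μ ν :=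
  ⟨by simp, by simp⟩

theorem abs_integral_sub_integral_le_W1 {μ ν : Measure ℝ} [IsProbabilityMeasure μ]
    [IsProbabilityMeasure ν] (hμ : Integrable (fun x : ℝ => x) μ)
    (hν : Integrable (fun x : ℝ => x) ν) {f : ℝ → ℝ} (hf : LipschitzWith 1 f) :
    |∫ x, f x ∂μ - ∫ x, f x ∂ν| ≤ W1 μ ν := by
  refine le_csInf ((Set.nonempty_of_mem (prod_mem_couplings μ ν)).image _) ?_
  rintro _ ⟨π, ⟨hπμ, hπν⟩, rfl⟩
  have : IsProbabilityMeasure (π.map Prod.fst) := hπμ ▸ inferInstance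
  have := Measure.isProbabilityMeasure_of_map (μ := π) Prod.fst
  have hfst : Integrable (fun p : ℝ × ℝ => p.1) π := (hπμ ▸ hμ).comp_measurable measurable_fst
  have hsnd : Integrable (fun p : ℝ × ℝ => p.2) π := (hπν ▸ hν).comp_measurable measurable_snd
  calc |∫ x, f x ∂μ - ∫ x, f x ∂ν| = |∫ p, (f p.1 - f p.2) ∂π| := by
        rw [← hπμ, ← hπν,
          integral_map measurable_fst.aemeasurable hf.continuous.aestronglyMeasurable,
          integral_map measurable_snd.aemeasurable hf.continuous.aestronglyMeasurable,
          integral_sub (hf.integrable_comp hfst) (hf.integrable_comp hsnd)]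
    _ ≤ ∫ p, |f p.1 - f p.2| ∂π := abs_integral_le_integral_abs
    _ ≤ ∫ p, |p.1 - p.2| ∂π :=
        integral_mono ((hf.integrable_comp hfst).sub (hf.integrable_comp hsnd)).abs
          (hfst.sub hsnd).abs fun p => by simpa [Real.dist_eq] using hf.dist_le_mul p.1 p.2

def call (η : Measure ℝ) (x : ℝ) : ℝ := ∫ t, max (t - x) 0 ∂η

theorem put_nonneg (η : Measure ℝ) (x : ℝ) : 0 ≤ put η x :=
  integral_nonneg fun _ => le_max_right _ _

theorem call_nonneg (η : Measure ℝ) (x : ℝ) : 0 ≤ call η x :=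
  integral_nonneg fun _ => le_max_right _ _

theorem lipschitzWith_put_integrand (x : ℝ) : LipschitzWith 1 fun t : ℝ => max (x - t) 0 := by
  simpa using ((LipschitzWith.const x).sub LipschitzWith.id).max_const 0

theorem lipschitzWith_call_integrand (x : ℝ) : LipschitzWith 1 fun t : ℝ => max (t - x) 0 := by
  simpa using (LipschitzWith.id.sub (LipschitzWith.const x)).max_const 0

theorem tendsto_put_atBot {α : Measure ℝ} (hα : Integrable (fun x : ℝ => x) α) :
    Tendsto (put α) atBot (𝓝 0) := by
  have h := tendsto_integral_filter_of_dominated_convergence (fun t => |t|)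
    (Eventually.of_forall fun x => (lipschitzWith_put_integrand x).continuous.aestronglyMeasurable)
    ((eventually_le_atBot 0).mono fun x hx => ae_of_all _ fun t => by
      rw [Real.norm_of_nonneg (le_max_right _ _)]
      exact max_le (by linarith [neg_abs_le t]) (abs_nonneg t))
    hα.abs
    (ae_of_all _ fun t => tendsto_const_nhds.congr'
      ((eventually_le_atBot t).mono fun x hx => (max_eq_right (by linarith)).symm))
  rwa [integral_zero] at h

theorem tendsto_call_atTop {α : Measure ℝ} (hα : Integrable (fun x : ℝ => x) α) :
    Tendsto (call α) atTop (𝓝 0) := by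
  have h := tendsto_integral_filter_of_dominated_convergence (fun t => |t|)
    (Eventually.of_forall fun x => (lipschitzWith_call_integrand x).continuous.aestronglyMeasurable)
    ((eventually_ge_atTop 0).mono fun x hx => ae_of_all _ fun t => by
      rw [Real.norm_of_nonneg (le_max_right _ _)]
      exact max_le (by linarith [le_abs_self t]) (abs_nonneg t))
    hα.abs
    (ae_of_all _ fun t => tendsto_const_nhds.congr'
      ((eventually_ge_atTop t).mono fun x hx => (max_eq_right (by linarith)).symm))
  rwa [integral_zero] at h

section PutCall

variable {α β : Measure ℝ} [IsProbabilityMeasure α] [IsProbabilityMeasure β]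

theorem abs_put_sub_put_le_W1 (hα : Integrable (fun x : ℝ => x) α)
    (hβ : Integrable (fun x : ℝ => x) β) (x : ℝ) : |put α x - put β x| ≤ W1 α β :=
  abs_integral_sub_integral_le_W1 hα hβ (lipschitzWith_put_integrand x)

theorem put_sub_call (hα : Integrable (fun x : ℝ => x) α) (x : ℝ) :
    put α x - call α x = x - ∫ t, t ∂α := by
  have hsplit : ∀ t : ℝ, max (x - t) 0 - max (t - x) 0 = x - t := fun t => by
    rcases le_total x t with h | h <;> simp [h]
  rw [put, call, ← integral_sub ((lipschitzWith_put_integrand x).integrable_comp hα)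
    ((lipschitzWith_call_integrand x).integrable_comp hα)]
  simp_rw [hsplit]
  rw [integral_sub (integrable_const x) hα, integral_const, probReal_univ, one_smul]

theorem abs_integral_id_sub_le_of_abs_put_sub_le (hα : Integrable (fun x : ℝ => x) α)
    (hβ : Integrable (fun x : ℝ => x) β) {δ : ℝ} (hput : ∀ x, |put α x - put β x| ≤ δ) :
    |∫ t, t ∂α - ∫ t, t ∂β| ≤ δ := by
  have hbound : ∀ x, |∫ t, t ∂α - ∫ t, t ∂β| ≤ δ + (call α x + call β x) := fun x => by
    have := call_nonneg α x
    have := call_nonneg β x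
    have := put_sub_call hα x
    have := put_sub_call hβ x
    have := abs_le.mp (hput x)
    rw [abs_le]
    constructor <;> linarith
  simpa using ge_of_tendsto (tendsto_const_nhds.add
    ((tendsto_call_atTop hα).add (tendsto_call_atTop hβ))) (Eventually.of_forall hbound)

theorem call_le_call_add_of_abs_put_sub_le (hα : Integrable (fun x : ℝ => x) α)
    (hβ : Integrable (fun x : ℝ => x) β) {δ : ℝ} (hput : ∀ x, |put α x - put β x| ≤ δ) (x : ℝ) :
    call α x ≤ call β x + 2 * δ := by
  have := put_sub_call hα x
  have := put_sub_call hβ x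
  have := abs_le.mp (hput x)
  have := abs_le.mp (abs_integral_id_sub_le_of_abs_put_sub_le hα hβ hput)
  linarith

end PutCall

section CdfPut

variable {α β : Measure ℝ} [IsProbabilityMeasure α] [IsProbabilityMeasure β]

theorem put_add_sub_put_eq_integral (hα : Integrable (fun x : ℝ => x) α) (x h : ℝ) :
    put α (x + h) - put α x = ∫ t, (max (x + h - t) 0 - max (x - t) 0) ∂α :=
  (integral_sub ((lipschitzWith_put_integrand _).integrable_comp hα)
    ((lipschitzWith_put_integrand _).integrable_comp hα)).symm

theorem integral_indicator_Iic_const (c x : ℝ) :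
    ∫ t, (Iic x).indicator (fun _ => c) t ∂α = c * cdf α x := by
  rw [integral_indicator_const c measurableSet_Iic, smul_eq_mul, cdf_eq_real, mul_comm]

theorem mul_cdf_le_put_add_sub_put (hα : Integrable (fun x : ℝ => x) α) {h : ℝ} (hh : 0 ≤ h)
    (x : ℝ) : h * cdf α x ≤ put α (x + h) - put α x := by
  rw [put_add_sub_put_eq_integral hα, ← integral_indicator_Iic_const]
  refine integral_mono ((integrable_const h).indicator measurableSet_Iic)
    (((lipschitzWith_put_integrand _).integrable_comp hα).sub
      ((lipschitzWith_put_integrand _).integrable_comp hα)) fun t => ?_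
  by_cases ht : t ≤ x
  · simp [ht, show 0 ≤ x - t by linarith, show 0 ≤ x + h - t by linarith]
  · simp only [indicator_of_notMem (show t ∉ Iic x from ht)]
    linarith [max_le_max_right 0 (show x - t ≤ x + h - t by linarith)]

theorem put_add_sub_put_le_mul_cdf (hα : Integrable (fun x : ℝ => x) α) {h : ℝ} (hh : 0 ≤ h)
    (x : ℝ) : put α (x + h) - put α x ≤ h * cdf α (x + h) := by
  rw [put_add_sub_put_eq_integral hα, ← integral_indicator_Iic_const]
  refine integral_mono (((lipschitzWith_put_integrand _).integrable_comp hα).sub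
      ((lipschitzWith_put_integrand _).integrable_comp hα))
    ((integrable_const h).indicator measurableSet_Iic) fun t => ?_
  by_cases ht : t ≤ x + h
  · simp only [indicator_of_mem (show t ∈ Iic (x + h) from ht)]
    have := abs_max_sub_max_le_max (x + h - t) 0 (x - t) 0
    rw [sub_self, abs_zero, show x + h - t - (x - t) = h by ring, abs_of_nonneg hh,
      max_eq_left hh] at this
    exact (le_abs_self _).trans this
  · simp [ht, show x + h - t ≤ 0 by linarith, show x - t ≤ 0 by linarith]

theorem abs_cdf_sub_cdf_le (hα : Integrable (fun x : ℝ => x) α)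
    (hβ : Integrable (fun x : ℝ => x) β) {δ : ℝ} (hput : ∀ x, |put α x - put β x| ≤ δ)
    {h : ℝ} (hh : 0 < h) (x : ℝ) :
    |cdf α x - cdf β x| ≤ cdf β (x + h) - cdf β (x - h) + 2 * δ / h := by
  have hα₁ := mul_cdf_le_put_add_sub_put hα hh.le x
  have hα₂ := put_add_sub_put_le_mul_cdf hα hh.le (x - h)
  have hβ₁ := put_add_sub_put_le_mul_cdf hβ hh.le x
  have hβ₂ := mul_cdf_le_put_add_sub_put hβ hh.le (x - h)
  rw [sub_add_cancel] at hα₂ hβ₂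
  have := abs_le.mp (hput (x + h))
  have := abs_le.mp (hput x)
  have := abs_le.mp (hput (x - h))
  have := mul_le_mul_of_nonneg_left (monotone_cdf β (show x - h ≤ x by linarith)) hh.le
  have := mul_le_mul_of_nonneg_left (monotone_cdf β (show x ≤ x + h by linarith)) hh.le
  have key : h * |cdf α x - cdf β x| ≤ h * (cdf β (x + h) - cdf β (x - h)) + 2 * δ := by
    rw [← abs_of_pos hh, ← abs_mul, abs_of_pos hh, abs_le, mul_sub, mul_sub]
    constructor <;> linarith
  calc |cdf α x - cdf β x| ≤ (h * (cdf β (x + h) - cdf β (x - h)) + 2 * δ) / h :=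
        (le_div_iff₀' hh).2 key
    _ = cdf β (x + h) - cdf β (x - h) + 2 * δ / h := by field_simp

end CdfPut

theorem lintegral_measure_prodMk_preimage_comm {X Y : Type*} [MeasurableSpace X]
    [MeasurableSpace Y] (μ : Measure X) (ν : Measure Y) [SFinite μ] [SFinite ν]
    {s : Set (X × Y)} (hs : MeasurableSet s) :
    ∫⁻ x, ν (Prod.mk x ⁻¹' s) ∂μ = ∫⁻ y, μ ((·, y) ⁻¹' s) ∂ν := by
  rw [← Measure.prod_apply hs, Measure.prod_apply_symm hs]

section Tonelli

variable {α : Measure ℝ} [IsProbabilityMeasure α]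

theorem lintegral_Iic_ofReal_cdf (hα : Integrable (fun x : ℝ => x) α) (B : ℝ) :
    ∫⁻ x in Iic B, ENNReal.ofReal (cdf α x) = ENNReal.ofReal (put α B) := by
  calc ∫⁻ x in Iic B, ENNReal.ofReal (cdf α x)
      = ∫⁻ x in Iic B, α (Prod.mk x ⁻¹' {p : ℝ × ℝ | p.2 ≤ p.1}) := by
        simp_rw [ofReal_cdf]; rfl
    _ = ∫⁻ t, volume.restrict (Iic B) ((·, t) ⁻¹' {p : ℝ × ℝ | p.2 ≤ p.1}) ∂α :=
        lintegral_measure_prodMk_preimage_comm _ _ (measurableSet_le measurable_snd measurable_fst)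
    _ = ∫⁻ t, ENNReal.ofReal (max (B - t) 0) ∂α := by
        refine lintegral_congr fun t => ?_
        rw [Measure.restrict_apply' measurableSet_Iic]
        simp [show {x : ℝ | t ≤ x} ∩ Iic B = Icc t B by ext; simp]
    _ = ENNReal.ofReal (put α B) :=
        (ofReal_integral_eq_lintegral_ofReal
          ((lipschitzWith_put_integrand B).integrable_comp hα)
          (ae_of_all _ fun t => le_max_right _ _)).symm

theorem lintegral_Ioi_ofReal_one_sub_cdf (hα : Integrable (fun x : ℝ => x) α) (A : ℝ) :
    ∫⁻ x in Ioi A, ENNReal.ofReal (1 - cdf α x) = ENNReal.ofReal (call α A) := by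
  calc ∫⁻ x in Ioi A, ENNReal.ofReal (1 - cdf α x)
      = ∫⁻ x in Ioi A, α (Prod.mk x ⁻¹' {p : ℝ × ℝ | p.1 < p.2}) := by
        refine lintegral_congr fun x => ?_
        rw [ENNReal.ofReal_sub _ (cdf_nonneg α x), ofReal_cdf, ENNReal.ofReal_one,
          ← prob_compl_eq_one_sub measurableSet_Iic, compl_Iic]
        rfl
    _ = ∫⁻ t, volume.restrict (Ioi A) ((·, t) ⁻¹' {p : ℝ × ℝ | p.1 < p.2}) ∂α :=
        lintegral_measure_prodMk_preimage_comm _ _ (measurableSet_lt measurable_fst measurable_snd)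
    _ = ∫⁻ t, ENNReal.ofReal (max (t - A) 0) ∂α := by
        refine lintegral_congr fun t => ?_
        rw [Measure.restrict_apply' measurableSet_Ioi]
        simp [show {x : ℝ | x < t} ∩ Ioi A = Ioo A t by ext; simp [and_comm]]
    _ = ENNReal.ofReal (call α A) :=
        (ofReal_integral_eq_lintegral_ofReal
          ((lipschitzWith_call_integrand A).integrable_comp hα)
          (ae_of_all _ fun t => le_max_right _ _)).symm

theorem lintegral_measure_Ioc_sub_add (h : ℝ) :
    ∫⁻ x, α (Ioc (x - h) (x + h)) = ENNReal.ofReal (2 * h) := by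
  have hslice (t : ℝ) : {x : ℝ | x - h < t ∧ t ≤ x + h} = Ico (t - h) (t + h) := by
    ext x
    rw [mem_Ico]
    exact ⟨fun ⟨h₁, h₂⟩ => ⟨by linarith, by linarith⟩, fun ⟨h₁, h₂⟩ => ⟨by linarith, by linarith⟩⟩
  calc ∫⁻ x, α (Ioc (x - h) (x + h))
      = ∫⁻ x, α (Prod.mk x ⁻¹' {p : ℝ × ℝ | p.1 - h < p.2 ∧ p.2 ≤ p.1 + h}) := rfl
    _ = ∫⁻ t, volume ((·, t) ⁻¹' {p : ℝ × ℝ | p.1 - h < p.2 ∧ p.2 ≤ p.1 + h}) ∂α :=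
        lintegral_measure_prodMk_preimage_comm _ _
          ((measurableSet_lt (by fun_prop) measurable_snd).inter
            (measurableSet_le measurable_snd (by fun_prop)))
    _ = ∫⁻ _, ENNReal.ofReal (2 * h) ∂α := lintegral_congr fun t => by
        rw [preimage_ofPred_eq, hslice, Real.volume_Ico]
        ring_nf
    _ = ENNReal.ofReal (2 * h) := by simp

end Tonelli

/-- The left-continuous inverse of `cdf μ`. Only its values on `Ioo 0 1` matter: there the set is
nonempty and bounded below, elsewhere `sInf` returns a junk value. -/
def quantile (μ : Measure ℝ) (u : ℝ) : ℝ := sInf {x | u ≤ cdf μ x}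

section Quantile

variable {μ ν : Measure ℝ}

theorem quantile_le_iff {u : ℝ} (hu : u ∈ Ioo 0 1) (x : ℝ) :
    quantile μ u ≤ x ↔ u ≤ cdf μ x := by
  obtain ⟨y₀, hy₀⟩ := ((tendsto_cdf_atBot μ).eventually (eventually_lt_nhds hu.1)).exists
  have hbdd : BddBelow {x | u ≤ cdf μ x} := ⟨y₀, fun y hy =>
    le_of_lt (lt_of_not_ge fun hyy => (hy.trans (monotone_cdf μ hyy)).not_gt hy₀)⟩
  have hne : {x | u ≤ cdf μ x}.Nonempty :=
    ((tendsto_cdf_atTop μ).eventually (eventually_gt_nhds hu.2)).exists.imp fun _ => le_of_lt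
  refine ⟨fun hx => ?_, fun hx => csInf_le hbdd hx⟩
  refine ge_of_tendsto ((cdf μ).right_continuous x |>.mono Ioi_subset_Ici_self) ?_
  filter_upwards [self_mem_nhdsWithin] with w hw
  obtain ⟨y, hy, hyw⟩ := exists_lt_of_csInf_lt hne (hx.trans_lt hw)
  exact hy.trans (monotone_cdf μ hyw.le)

theorem lt_quantile_iff {u : ℝ} (hu : u ∈ Ioo 0 1) (x : ℝ) :
    x < quantile μ u ↔ cdf μ x < u := by
  simpa only [not_le] using (quantile_le_iff hu x).not

theorem aemeasurable_quantile : AEMeasurable (quantile μ) (volume.restrict (Ioo 0 1)) :=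
  aemeasurable_restrict_of_monotoneOn measurableSet_Ioo fun _ hu _ hv huv =>
    (quantile_le_iff hu _).2 (huv.trans ((quantile_le_iff hv _).1 le_rfl))

theorem volume_Ioc_inter_Ioo_zero_one {c d : ℝ} (hc : 0 ≤ c) (hd : d ≤ 1) :
    volume (Ioc c d ∩ Ioo 0 1) = ENNReal.ofReal (d - c) := by
  rw [measure_congr ((ae_eq_refl (Ioc c d)).inter Ioo_ae_eq_Icc),
    inter_eq_left.2 (Ioc_subset_Icc_self.trans (Icc_subset_Icc hc hd)), Real.volume_Ioc]

theorem map_quantile [IsProbabilityMeasure μ] :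
    (volume.restrict (Ioo 0 1)).map (quantile μ) = μ := by
  refine Measure.ext_of_Ioc _ _ fun a b _ => ?_
  have hpre : quantile μ ⁻¹' Ioc a b ∩ Ioo 0 1 = Ioc (cdf μ a) (cdf μ b) ∩ Ioo 0 1 := by
    ext u
    simp only [mem_inter_iff, mem_preimage, mem_Ioc, and_congr_left_iff]
    exact fun hu => and_congr (lt_quantile_iff hu a) (quantile_le_iff hu b)
  rw [Measure.map_apply_of_aemeasurable aemeasurable_quantile measurableSet_Ioc,
    Measure.restrict_apply' measurableSet_Ioo, hpre,
    volume_Ioc_inter_Ioo_zero_one (cdf_nonneg μ a) (cdf_le_one μ b), ← (cdf μ).measure_Ioc,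
    measure_cdf]

def quantileCoupling (μ ν : Measure ℝ) : Measure (ℝ × ℝ) :=
  (volume.restrict (Ioo 0 1)).map fun u => (quantile μ u, quantile ν u)

instance isFiniteMeasure_quantileCoupling : IsFiniteMeasure (quantileCoupling μ ν) := by
  unfold quantileCoupling; infer_instance

theorem aemeasurable_quantile_prod :
    AEMeasurable (fun u => (quantile μ u, quantile ν u)) (volume.restrict (Ioo 0 1)) :=
  aemeasurable_quantile.prodMk aemeasurable_quantile

theorem quantileCoupling_mem_couplings [IsProbabilityMeasure μ] [IsProbabilityMeasure ν] :
    quantileCoupling μ ν ∈ Couplings μ ν := by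
  constructor <;>
  rw [quantileCoupling, AEMeasurable.map_map_of_aemeasurable (by fun_prop)
    aemeasurable_quantile_prod] <;>
  exact map_quantile

theorem map_swap_quantileCoupling :
    (quantileCoupling μ ν).map Prod.swap = quantileCoupling ν μ := by
  rw [quantileCoupling, AEMeasurable.map_map_of_aemeasurable measurable_swap.aemeasurable
    aemeasurable_quantile_prod]
  rfl

theorem quantileCoupling_apply (x : ℝ) :
    quantileCoupling μ ν {p | p.2 ≤ x ∧ x < p.1} = ENNReal.ofReal (cdf ν x - cdf μ x) := by
  have hpre : (fun u => (quantile μ u, quantile ν u)) ⁻¹' {p | p.2 ≤ x ∧ x < p.1} ∩ Ioo 0 1 =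
      Ioc (cdf μ x) (cdf ν x) ∩ Ioo 0 1 := by
    ext u
    simp only [mem_inter_iff, mem_preimage, mem_Ioc, and_congr_left_iff]
    exact fun hu => (and_congr (quantile_le_iff hu x) (lt_quantile_iff hu x)).trans and_comm
  have hmeas : MeasurableSet {p : ℝ × ℝ | p.2 ≤ x ∧ x < p.1} :=
    (measurableSet_le measurable_snd measurable_const).inter
      (measurableSet_lt measurable_const measurable_fst)
  rw [quantileCoupling, Measure.map_apply_of_aemeasurable aemeasurable_quantile_prod hmeas,
    Measure.restrict_apply' measurableSet_Ioo, hpre,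
    volume_Ioc_inter_Ioo_zero_one (cdf_nonneg μ x) (cdf_le_one ν x)]

end Quantile

theorem lintegral_ofReal_fst_sub_snd (π : Measure (ℝ × ℝ)) [SFinite π] :
    ∫⁻ p, ENNReal.ofReal (p.1 - p.2) ∂π = ∫⁻ x, π {p | p.2 ≤ x ∧ x < p.1} := by
  calc ∫⁻ p, ENNReal.ofReal (p.1 - p.2) ∂π
      = ∫⁻ p, volume (Prod.mk p ⁻¹' {q : (ℝ × ℝ) × ℝ | q.1.2 ≤ q.2 ∧ q.2 < q.1.1}) ∂π :=
        lintegral_congr fun p => Real.volume_Ico.symm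
    _ = ∫⁻ x, π {p | p.2 ≤ x ∧ x < p.1} :=
        lintegral_measure_prodMk_preimage_comm _ _
          ((measurableSet_le (by fun_prop) measurable_snd).inter
            (measurableSet_lt measurable_snd (by fun_prop)))

theorem ENNReal.ofReal_abs_sub (a b : ℝ) :
    ENNReal.ofReal |a - b| = ENNReal.ofReal (a - b) + ENNReal.ofReal (b - a) := by
  rcases le_total a b with h | h
  · rw [abs_sub_comm, abs_of_nonneg (sub_nonneg.2 h), ENNReal.ofReal_of_nonpos (sub_nonpos.2 h),
      zero_add]
  · rw [abs_of_nonneg (sub_nonneg.2 h), ENNReal.ofReal_of_nonpos (sub_nonpos.2 h), add_zero]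

theorem lintegral_ofReal_sub_quantileCoupling (μ ν : Measure ℝ) :
    ∫⁻ p, ENNReal.ofReal (p.1 - p.2) ∂quantileCoupling μ ν =
      ∫⁻ x, ENNReal.ofReal (cdf ν x - cdf μ x) := by
  simp_rw [lintegral_ofReal_fst_sub_snd, quantileCoupling_apply]

theorem W1_le_lintegral_abs_cdf_sub (μ ν : Measure ℝ) [IsProbabilityMeasure μ]
    [IsProbabilityMeasure ν] :
    W1 μ ν ≤ (∫⁻ x, ENNReal.ofReal |cdf μ x - cdf ν x|).toReal := by
  have hcost : ∫⁻ p, ENNReal.ofReal |p.1 - p.2| ∂quantileCoupling μ ν =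
      ∫⁻ x, ENNReal.ofReal |cdf μ x - cdf ν x| := by
    have hswap : ∫⁻ p, ENNReal.ofReal (p.2 - p.1) ∂quantileCoupling μ ν =
        ∫⁻ p, ENNReal.ofReal (p.1 - p.2) ∂quantileCoupling ν μ := by
      rw [← map_swap_quantileCoupling, lintegral_map (by fun_prop) measurable_swap]
      rfl
    simp_rw [ENNReal.ofReal_abs_sub]
    rw [lintegral_add_left (by fun_prop), hswap, lintegral_ofReal_sub_quantileCoupling,
      lintegral_ofReal_sub_quantileCoupling, add_comm]
    exact (lintegral_add_left
      ((monotone_cdf μ).measurable.sub (monotone_cdf ν).measurable).ennreal_ofReal _).symm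
  calc W1 μ ν ≤ ∫ p, |p.1 - p.2| ∂quantileCoupling μ ν :=
        W1_le_integral quantileCoupling_mem_couplings
    _ = _ := by
        rw [integral_eq_lintegral_of_nonneg_ae (ae_of_all _ fun _ => abs_nonneg _) (by fun_prop),
          hcost]

section Estimate

variable {α β : Measure ℝ} [IsProbabilityMeasure α] [IsProbabilityMeasure β]

theorem setLIntegral_Iic_abs_cdf_sub_le (hα : Integrable (fun x : ℝ => x) α)
    (hβ : Integrable (fun x : ℝ => x) β) (B : ℝ) :
    ∫⁻ x in Iic B, ENNReal.ofReal |cdf α x - cdf β x| ≤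
      ENNReal.ofReal (put α B) + ENNReal.ofReal (put β B) := by
  calc ∫⁻ x in Iic B, ENNReal.ofReal |cdf α x - cdf β x|
      ≤ ∫⁻ x in Iic B, (ENNReal.ofReal (cdf α x) + ENNReal.ofReal (cdf β x)) := by
        refine lintegral_mono fun x => (ENNReal.ofReal_le_ofReal ?_).trans ENNReal.ofReal_add_le
        have := cdf_nonneg α x
        have := cdf_nonneg β x
        exact abs_le.2 ⟨by linarith, by linarith⟩
    _ = ENNReal.ofReal (put α B) + ENNReal.ofReal (put β B) := by
        rw [lintegral_add_left (monotone_cdf α).measurable.ennreal_ofReal,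
          lintegral_Iic_ofReal_cdf hα, lintegral_Iic_ofReal_cdf hβ]

theorem setLIntegral_Ioi_abs_cdf_sub_le (hα : Integrable (fun x : ℝ => x) α)
    (hβ : Integrable (fun x : ℝ => x) β) (A : ℝ) :
    ∫⁻ x in Ioi A, ENNReal.ofReal |cdf α x - cdf β x| ≤
      ENNReal.ofReal (call α A) + ENNReal.ofReal (call β A) := by
  calc ∫⁻ x in Ioi A, ENNReal.ofReal |cdf α x - cdf β x|
      ≤ ∫⁻ x in Ioi A, (ENNReal.ofReal (1 - cdf α x) + ENNReal.ofReal (1 - cdf β x)) := by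
        refine lintegral_mono fun x => (ENNReal.ofReal_le_ofReal ?_).trans ENNReal.ofReal_add_le
        have := cdf_le_one α x
        have := cdf_le_one β x
        exact abs_le.2 ⟨by linarith, by linarith⟩
    _ = ENNReal.ofReal (call α A) + ENNReal.ofReal (call β A) := by
        rw [lintegral_add_left ((monotone_cdf α).measurable.const_sub 1).ennreal_ofReal,
          lintegral_Ioi_ofReal_one_sub_cdf hα, lintegral_Ioi_ofReal_one_sub_cdf hβ]

theorem setLIntegral_Ioc_abs_cdf_sub_le (hα : Integrable (fun x : ℝ => x) α)
    (hβ : Integrable (fun x : ℝ => x) β) {δ : ℝ} (hput : ∀ x, |put α x - put β x| ≤ δ)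
    {h : ℝ} (hh : 0 < h) (a b : ℝ) :
    ∫⁻ x in Ioc a b, ENNReal.ofReal |cdf α x - cdf β x| ≤
      ENNReal.ofReal (2 * h) + ENNReal.ofReal (2 * δ / h) * ENNReal.ofReal (b - a) := by
  calc ∫⁻ x in Ioc a b, ENNReal.ofReal |cdf α x - cdf β x|
      ≤ ∫⁻ x in Ioc a b, (β (Ioc (x - h) (x + h)) + ENNReal.ofReal (2 * δ / h)) := by
        refine lintegral_mono fun x => ?_
        have hwindow :
            β (Ioc (x - h) (x + h)) = ENNReal.ofReal (cdf β (x + h) - cdf β (x - h)) := by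
          rw [← (cdf β).measure_Ioc, measure_cdf]
        rw [hwindow]
        exact (ENNReal.ofReal_le_ofReal (abs_cdf_sub_cdf_le hα hβ hput hh x)).trans
          ENNReal.ofReal_add_le
    _ ≤ (∫⁻ x, β (Ioc (x - h) (x + h))) + ENNReal.ofReal (2 * δ / h) * volume (Ioc a b) := by
        rw [lintegral_add_right _ measurable_const, setLIntegral_const]
        exact add_le_add (setLIntegral_le_lintegral _ _) le_rfl
    _ = ENNReal.ofReal (2 * h) + ENNReal.ofReal (2 * δ / h) * ENNReal.ofReal (b - a) := by
        rw [lintegral_measure_Ioc_sub_add, Real.volume_Ioc]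

theorem W1_le_of_abs_put_sub_le (hα : Integrable (fun x : ℝ => x) α)
    (hβ : Integrable (fun x : ℝ => x) β) {δ : ℝ} (hput : ∀ x, |put α x - put β x| ≤ δ)
    {h : ℝ} (hh : 0 < h) {A : ℝ} (hA : 0 ≤ A) :
    W1 α β ≤ (put α (-A) + put β (-A)) + (2 * h + 2 * δ / h * (2 * A)) + (call α A + call β A) := by
  have hδ : 0 ≤ δ := (abs_nonneg _).trans (hput 0)
  have := put_nonneg α (-A)
  have := put_nonneg β (-A)
  have := call_nonneg α A
  have := call_nonneg β A
  have huniv : (univ : Set ℝ) = (Iic (-A) ∪ Ioc (-A) A) ∪ Ioi A := by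
    rw [Iic_union_Ioc_eq_Iic (by linarith), Iic_union_Ioi]
  refine (W1_le_lintegral_abs_cdf_sub α β).trans (ENNReal.toReal_le_of_le_ofReal (by positivity) ?_)
  calc ∫⁻ x, ENNReal.ofReal |cdf α x - cdf β x|
      ≤ ((∫⁻ x in Iic (-A), ENNReal.ofReal |cdf α x - cdf β x|)
          + ∫⁻ x in Ioc (-A) A, ENNReal.ofReal |cdf α x - cdf β x|)
        + ∫⁻ x in Ioi A, ENNReal.ofReal |cdf α x - cdf β x| := by
        rw [← setLIntegral_univ, huniv]
        exact (lintegral_union_le _ _ _).trans (add_le_add (lintegral_union_le _ _ _) le_rfl)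
    _ ≤ (ENNReal.ofReal (put α (-A)) + ENNReal.ofReal (put β (-A))
          + (ENNReal.ofReal (2 * h) + ENNReal.ofReal (2 * δ / h) * ENNReal.ofReal (A - -A)))
        + (ENNReal.ofReal (call α A) + ENNReal.ofReal (call β A)) :=
        add_le_add (add_le_add (setLIntegral_Iic_abs_cdf_sub_le hα hβ _)
          (setLIntegral_Ioc_abs_cdf_sub_le hα hβ hput hh _ _))
          (setLIntegral_Ioi_abs_cdf_sub_le hα hβ _)
    _ = _ := by
        rw [show A - -A = 2 * A by ring, ENNReal.ofReal_add, ENNReal.ofReal_add,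
          ENNReal.ofReal_add, ENNReal.ofReal_add, ENNReal.ofReal_add,
          ENNReal.ofReal_mul (p := 2 * δ / h)] <;>
        positivity

end Estimate

theorem tendsto_W1_of_abs_put_sub_le {ι : Type*} {l : Filter ι} {αs : ι → Measure ℝ}
    {α : Measure ℝ} [∀ i, IsProbabilityMeasure (αs i)] [IsProbabilityMeasure α]
    (hαs : ∀ i, Integrable (fun x : ℝ => x) (αs i)) (hα : Integrable (fun x : ℝ => x) α)
    {δ : ι → ℝ} (hδ : Tendsto δ l (𝓝 0)) (hput : ∀ i x, |put (αs i) x - put α x| ≤ δ i) :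
    Tendsto (fun i => W1 (αs i) α) l (𝓝 0) := by
  refine tendsto_order.2 ⟨fun a ha => .of_forall fun i => ha.trans_le (W1_nonneg _ _),
    fun ε hε => ?_⟩
  have htail : Tendsto (fun A => put α (-A) + call α A) atTop (𝓝 0) := by
    simpa using ((tendsto_put_atBot hα).comp tendsto_neg_atTop_atBot).add (tendsto_call_atTop hα)
  have hh : 0 < ε / 6 := by positivity
  obtain ⟨A, hAtail, hA⟩ :=
    ((htail.eventually (gt_mem_nhds hh)).and (eventually_ge_atTop 0)).exists
  have hδsmall : ∀ᶠ i in l, (3 + 4 * A / (ε / 6)) * δ i < ε / 3 := by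
    refine (hδ.const_mul (3 + 4 * A / (ε / 6))).eventually (gt_mem_nhds ?_)
    rw [mul_zero]
    positivity
  filter_upwards [hδsmall] with i hi
  have hW1 := W1_le_of_abs_put_sub_le (hαs i) hα (hput i) hh hA
  have := abs_le.mp (hput i (-A))
  have := call_le_call_add_of_abs_put_sub_le (hαs i) hα (hput i) A
  have : 2 * δ i / (ε / 6) * (2 * A) = 4 * A / (ε / 6) * δ i := by ring
  linarith

theorem W1_convergence_of_cd_max (μk νk : ℕ → Measure ℝ) (μ ν : Measure ℝ)
    [IsProbabilityMeasure μ] [IsProbabilityMeasure ν]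
    (hμk : ∀ k, IsProbabilityMeasure (μk k)) (hνk : ∀ k, IsProbabilityMeasure (νk k))
    (hμint : Integrable (fun x : ℝ => x) μ) (hνint : Integrable (fun x : ℝ => x) ν)
    (hμkint : ∀ k, Integrable (fun x : ℝ => x) (μk k))
    (hνkint : ∀ k, Integrable (fun x : ℝ => x) (νk k))
    (hμW : Tendsto (fun k => W1 (μk k) μ) atTop (nhds 0))
    (hνW : Tendsto (fun k => W1 (νk k) ν) atTop (nhds 0))
    (σk : ℕ → Measure ℝ) (σ : Measure ℝ)
    (hσk : ∀ k, IsProbabilityMeasure (σk k)) (hσ : IsProbabilityMeasure σ)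
    (hσkint : ∀ k, Integrable (fun x : ℝ => x) (σk k))
    (hσint : Integrable (fun x : ℝ => x) σ)
    (hputk : ∀ k, ∀ x : ℝ, put (σk k) x = max (put (μk k) x) (put (νk k) x))
    (hput : ∀ x : ℝ, put σ x = max (put μ x) (put ν x)) :
    Tendsto (fun k => W1 (σk k) σ) atTop (nhds 0) := by
  have hputσ : ∀ k x, |put (σk k) x - put σ x| ≤ W1 (μk k) μ + W1 (νk k) ν := fun k x => by
    rw [hputk, hput]
    refine (abs_max_sub_max_le_max _ _ _ _).trans (max_le ?_ ?_)
    · exact le_add_of_le_of_nonneg (abs_put_sub_put_le_W1 (hμkint k) hμint x) (W1_nonneg _ _)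
    · exact le_add_of_nonneg_of_le (W1_nonneg _ _) (abs_put_sub_put_le_W1 (hνkint k) hνint x)
  exact tendsto_W1_of_abs_put_sub_le hσkint hσint (by simpa using hμW.add hνW) hputσ
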